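/- arXiv:1611.07793 — 2 statements merged into one kernel-verified Lean document; each statement's English description precedes it below -/
import Mathlib

section
/- For every n ≥ 0, the number of treeshelves of size n avoiding the pattern (left child having a right child) equals the Bell number b_n, the number of set partitions of {1,…,n}; equivalently, the exponential generating function of these counts is e^{e^z − 1}. -/
/-!
In an increasing tree avoiding the pattern, the root carries the minimum `m` of the labels, its
left subtree is a chain of left children (a left child never has a right child), and its right
subtree is again such a tree, on the labels outside this chain. Reading the root together with
its left chain as the block of `m` gives the recursion of set partitions: choose the rest of the
block of the minimum, then partition what remains. Both families are therefore equivalent, by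
induction on the size of the label set.
-/

/-- Binary trees with natural-number labels, where each child slot (left/right)
is explicit; `leaf` denotes the absence of a subtree.  A *treeshelf* will be such
a tree whose labels are exactly `{1, …, n}` and increase away from the root. -/
inductive TShelf : Type where
  | leaf : TShelf
  | node : ℕ → TShelf → TShelf → TShelf

namespace TShelf

/-- Whether the tree is nonempty (i.e. an actual node). -/
def isNode : TShelf → Bool
  | leaf => false
  | node _ _ _ => true

/-- The label of the root (junk value `0` for the empty tree). -/
def rootLabel : TShelf → ℕ
  | leaf => 0
  | node a _ _ => a

/-- The left subtree. -/
def left : TShelf → TShelf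
  | leaf => leaf
  | node _ l _ => l

/-- The right subtree. -/
def right : TShelf → TShelf
  | leaf => leaf
  | node _ _ r => r

/-- The multiset of labels occurring in the tree. -/
def labels : TShelf → Multiset ℕ
  | leaf => 0
  | node a l r => a ::ₘ (l.labels + r.labels)

/-- Every child's label is greater than its parent's label. -/
def increasing : TShelf → Bool
  | leaf => true
  | node a l r =>
      (!l.isNode || decide (a < l.rootLabel)) &&
      (!r.isNode || decide (a < r.rootLabel)) &&
      l.increasing && r.increasing

/-- The number of left children (nodes attached to their parent as a left child). -/
def numLeft : TShelf → ℕ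
  | leaf => 0
  | node _ l r => (if l.isNode then 1 else 0) + l.numLeft + r.numLeft

/-- `t` is a treeshelf of size `n`: its nodes are labeled bijectively by
`{1, …, n}` and labels increase from parents to children. -/
def IsShelf (n : ℕ) (t : TShelf) : Prop :=
  t.labels = (Finset.Icc 1 n).val ∧ t.increasing = true

/-- Avoidance of the pattern "a left child having a right child":
no node is simultaneously the left child of its parent and has a right child. -/
def avoidsLR : TShelf → Bool
  | leaf => true
  | node _ l r => !(l.isNode && l.right.isNode) && l.avoidsLR && r.avoidsLR

/-- Avoidance of the pattern "a left child having a left child":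
no node is simultaneously the left child of its parent and has a left child. -/
def avoidsLL : TShelf → Bool
  | leaf => true
  | node _ l r => !(l.isNode && l.left.isNode) && l.avoidsLL && r.avoidsLL

/-- Avoidance of the pattern "left label smaller than right label": no node has
both a left and a right child with the left child's label smaller than the
right child's label. -/
def avoidsLess : TShelf → Bool
  | leaf => true
  | node _ l r =>
      !(l.isNode && r.isNode && decide (l.rootLabel < r.rootLabel)) &&
      l.avoidsLess && r.avoidsLess

/-- Canonical representation of unordered sibling pairs: whenever a node has two
children, the left one carries the smaller label.  Trees satisfying this are
canonical representatives of trees whose sibling pairs are unordered. -/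
def pairCanon : TShelf → Bool
  | leaf => true
  | node _ l r =>
      (!(l.isNode && r.isNode) || decide (l.rootLabel < r.rootLabel)) &&
      l.pairCanon && r.pairCanon

/-- Canonical representation of untagged only children: every only child is a
right child.  Together with `pairCanon`, trees satisfying this are canonical
representatives of unordered binary increasing trees. -/
def singleRight : TShelf → Bool
  | leaf => true
  | node _ l r => (!l.isNode || r.isNode) && l.singleRight && r.singleRight

end TShelf

namespace Finset

variable {α : Type*}

/-- `B` is the block of `m` with `m` removed. -/
abbrev BlockSplit [DecidableEq α] (X : Finset α → Type*) (s : Finset α) (m : α) : Type _ :=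
  Σ B : {B : Finset α // B ⊆ s.erase m}, X (s.erase m \ B)

theorem card_erase_sdiff_lt [DecidableEq α] {s : Finset α} {m : α} (hm : m ∈ s)
    (B : Finset α) : (s.erase m \ B).card < s.card :=
  (card_le_card sdiff_subset).trans_lt (card_erase_lt_of_mem hm)

theorem cons_add_eq_val_iff [DecidableEq α] {s B : Finset α} {m : α} (hm : m ∈ s)
    (hB : B ⊆ s.erase m) {C : Multiset α} :
    m ::ₘ (B.val + C) = s.val ↔ C = (s.erase m \ B).val := by
  have hBle : B.val ≤ s.val.erase m := by simpa only [erase_val] using val_le_iff.2 hB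
  rw [sdiff_val, erase_val, eq_tsub_iff_add_eq_of_le hBle, add_comm]
  exact ⟨fun h => by rw [← h, Multiset.erase_cons_head],
    fun h => by rw [h, Multiset.cons_erase (hm : m ∈ s.val)]⟩

noncomputable def equivOfBlockSplit [LinearOrder α] {X Y : Finset α → Type*}
    (eX : ∀ s (hs : s.Nonempty), X s ≃ BlockSplit X s (s.min' hs))
    (eY : ∀ s (hs : s.Nonempty), Y s ≃ BlockSplit Y s (s.min' hs))
    (e₀ : X ∅ ≃ Y ∅) (s : Finset α) : X s ≃ Y s :=
  if hs : s.Nonempty then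
    (eX s hs).trans <| (Equiv.sigmaCongrRight fun B : {B // B ⊆ s.erase (s.min' hs)} =>
      equivOfBlockSplit eX eY e₀ (s.erase (s.min' hs) \ B.1)).trans (eY s hs).symm
  else by
    rw [not_nonempty_iff_eq_empty.1 hs]
    exact e₀
termination_by s.card
decreasing_by exact card_erase_sdiff_lt (s.min'_mem hs) _

end Finset

namespace Finpartition

open Finset

section

variable {α : Type*} [GeneralizedBooleanAlgebra α] [DecidableEq α] {a b : α}

theorem sup_parts_erase (P : Finpartition a) (hb : b ∈ P.parts) :
    (P.parts.erase b).sup id = a \ b := by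
  refine (Disjoint.sdiff_eq_of_sup_eq (supIndep_iff_disjoint_erase.1 P.supIndep b hb) ?_).symm
  rw [← sup_insert, insert_erase hb, P.sup_parts]

end

variable {α : Type*} [DecidableEq α] {s : Finset α} {m : α}

def insertBlock (hm : m ∈ s) (p : BlockSplit Finpartition s m) : Finpartition s :=
  p.2.extend (b := insert m p.1.1) (insert_ne_empty _ _)
    (by
      rw [disjoint_insert_right, mem_sdiff, not_and_not_right]
      exact ⟨fun h => (notMem_erase m s h).elim, sdiff_disjoint⟩)
    (by
      rw [sup_eq_union, union_comm, insert_union, union_sdiff_of_subset p.1.2, insert_erase hm])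

theorem part_insertBlock (hm : m ∈ s) (p : BlockSplit Finpartition s m) :
    (insertBlock hm p).part m = insert m p.1.1 :=
  part_eq_of_mem _ (mem_insert_self _ _) (mem_insert_self _ _)

theorem parts_insertBlock_erase (hm : m ∈ s) (p : BlockSplit Finpartition s m) :
    (insertBlock hm p).parts.erase (insert m p.1.1) = p.2.parts := by
  refine erase_insert fun h => ?_
  have := mem_sdiff.1 (p.2.le h (mem_insert_self m _))
  exact notMem_erase m s this.1

theorem insertBlock_injective (hm : m ∈ s) : Function.Injective (insertBlock hm) := by
  rintro ⟨⟨B, hB⟩, Q⟩ ⟨⟨B', hB'⟩, Q'⟩ h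
  have hBB' : B = B' := by
    have := congrArg (fun P => (P.part m).erase m) h
    simp only [part_insertBlock] at this
    rwa [erase_insert fun h => notMem_erase m s (hB h),
      erase_insert fun h => notMem_erase m s (hB' h)] at this
  subst hBB'
  have hQQ' : Q = Q' := by
    ext1
    calc Q.parts = (insertBlock hm ⟨⟨B, hB⟩, Q⟩).parts.erase (insert m B) :=
          (parts_insertBlock_erase hm ⟨⟨B, hB⟩, Q⟩).symm
      _ = (insertBlock hm ⟨⟨B, hB'⟩, Q'⟩).parts.erase (insert m B) := by rw [h]
      _ = Q'.parts := parts_insertBlock_erase hm ⟨⟨B, hB'⟩, Q'⟩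
  rw [hQQ']

theorem insertBlock_surjective (hm : m ∈ s) : Function.Surjective (insertBlock hm) := by
  intro P
  have hpart : P.part m ∈ P.parts := P.part_mem.2 hm
  have hsup : (P.parts.erase (P.part m)).sup id = s.erase m \ (P.part m).erase m := by
    rw [← erase_sdiff_distrib, erase_eq_of_notMem fun h => (mem_sdiff.1 h).2 (P.mem_part hm),
      sup_parts_erase P hpart]
  refine ⟨⟨⟨(P.part m).erase m, erase_subset_erase m (P.le hpart)⟩,
    P.ofSubset (erase_subset _ _) hsup⟩, ?_⟩
  ext1
  change insert (insert m ((P.part m).erase m)) (P.parts.erase (P.part m)) = P.parts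
  rw [insert_erase (P.mem_part hm), insert_erase hpart]

noncomputable def equivBlockSplit (hm : m ∈ s) : Finpartition s ≃ BlockSplit Finpartition s m :=
  (Equiv.ofBijective _ ⟨insertBlock_injective hm, insertBlock_surjective hm⟩).symm

end Finpartition

namespace TShelf

open Finset

variable {a x : ℕ} {l r t : TShelf} {L : List ℕ}

@[simp]
theorem isNode_eq_false : t.isNode = false ↔ t = leaf := by
  cases t <;> simp [isNode]

theorem labels_eq_zero_iff : t.labels = 0 ↔ t = leaf := by
  cases t <;> simp [labels]

theorem ne_leaf_of_mem_labels (hx : x ∈ t.labels) : t ≠ leaf := by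
  rintro rfl
  simp [labels] at hx

theorem increasing_node_iff_rootLabel : (node a l r).increasing = true ↔
    (l = leaf ∨ a < l.rootLabel) ∧ (r = leaf ∨ a < r.rootLabel) ∧
      l.increasing = true ∧ r.increasing = true := by
  simp only [increasing, Bool.and_eq_true, Bool.or_eq_true, Bool.not_eq_true', isNode_eq_false,
    decide_eq_true_eq, and_assoc]

theorem rootLabel_le_of_mem_labels (ht : t.increasing = true) (hx : x ∈ t.labels) :
    t.rootLabel ≤ x := by
  induction t with
  | leaf => simp [labels] at hx
  | node b l r ihl ihr =>
    obtain ⟨hl, hr, hli, hri⟩ := increasing_node_iff_rootLabel.1 ht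
    simp only [labels, Multiset.mem_cons, Multiset.mem_add] at hx
    rcases hx with rfl | hx | hx
    · rfl
    · exact ((hl.resolve_left (ne_leaf_of_mem_labels hx)).trans_le (ihl hli hx)).le
    · exact ((hr.resolve_left (ne_leaf_of_mem_labels hx)).trans_le (ihr hri hx)).le

theorem eq_leaf_or_lt_rootLabel_iff (ht : t.increasing = true) :
    (t = leaf ∨ a < t.rootLabel) ↔ ∀ x ∈ t.labels, a < x := by
  cases t with
  | leaf => simp [labels]
  | node b l r =>
    simp only [reduceCtorEq, false_or]
    exact ⟨fun h x hx => h.trans_le (rootLabel_le_of_mem_labels ht hx),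
      fun h => h b (Multiset.mem_cons_self _ _)⟩

theorem increasing_node_iff : (node a l r).increasing = true ↔
    (∀ x ∈ l.labels + r.labels, a < x) ∧ l.increasing = true ∧ r.increasing = true := by
  simp only [increasing_node_iff_rootLabel, Multiset.mem_add, or_imp, forall_and]
  constructor
  · rintro ⟨hl, hr, hli, hri⟩
    exact ⟨⟨(eq_leaf_or_lt_rootLabel_iff hli).1 hl, (eq_leaf_or_lt_rootLabel_iff hri).1 hr⟩,
      hli, hri⟩
  · rintro ⟨⟨hl, hr⟩, hli, hri⟩
    exact ⟨(eq_leaf_or_lt_rootLabel_iff hli).2 hl, (eq_leaf_or_lt_rootLabel_iff hri).2 hr,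
      hli, hri⟩

theorem avoidsLR_node_iff : (node a l r).avoidsLR = true ↔
    l.right = leaf ∧ l.avoidsLR = true ∧ r.avoidsLR = true := by
  cases l <;> simp [avoidsLR, right, isNode.eq_1, isNode.eq_2, and_assoc]

def leftChain : List ℕ → TShelf
  | [] => leaf
  | x :: xs => node x (leftChain xs) leaf

@[simp]
theorem labels_leftChain (L : List ℕ) : (leftChain L).labels = L := by
  induction L with
  | nil => rfl
  | cons x xs ih => simp [leftChain, labels, ih]

@[simp]
theorem right_leftChain (L : List ℕ) : (leftChain L).right = leaf := by
  cases L <;> rfl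

theorem avoidsLR_leftChain (L : List ℕ) : (leftChain L).avoidsLR = true := by
  induction L with
  | nil => rfl
  | cons x xs ih => exact avoidsLR_node_iff.2 ⟨right_leftChain xs, ih, rfl⟩

theorem increasing_leftChain (hL : L.Pairwise (· < ·)) : (leftChain L).increasing = true := by
  induction L with
  | nil => rfl
  | cons x xs ih =>
    rw [List.pairwise_cons] at hL
    refine increasing_node_iff.2 ⟨fun y hy => hL.1 y ?_, ih hL.2, rfl⟩
    simpa [labels] using hy

theorem eq_leftChain_sort (hi : t.increasing = true) (ha : t.avoidsLR = true)
    (hr : t.right = leaf) : t = leftChain (t.labels.sort (· ≤ ·)) := by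
  induction t with
  | leaf => simp [labels, leftChain]
  | node b l r ihl _ =>
    obtain rfl : r = leaf := hr
    obtain ⟨hlt, hli, -⟩ := increasing_node_iff.1 hi
    obtain ⟨hlr, hla, -⟩ := avoidsLR_node_iff.1 ha
    simp only [labels, add_zero] at hlt ⊢
    rw [Multiset.sort_cons _ _ _ fun y hy => (hlt y hy).le, leftChain, ← ihl hli hla hlr]

def AvoidingLR (s : Finset ℕ) : Type :=
  {t : TShelf // t.labels = s.val ∧ t.increasing = true ∧ t.avoidsLR = true}

namespace AvoidingLR

variable {s : Finset ℕ}

instance : Unique (AvoidingLR ∅) where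
  default := ⟨leaf, rfl, rfl, rfl⟩
  uniq t := Subtype.ext (labels_eq_zero_iff.1 t.2.1)

def attachBlock (hs : s.Nonempty) (p : BlockSplit AvoidingLR s (s.min' hs)) : AvoidingLR s :=
  ⟨node (s.min' hs) (leftChain (sort p.1.1)) p.2.1, by
    obtain ⟨⟨B, hB⟩, r, hr, hri, hra⟩ := p
    dsimp only
    refine ⟨?_, increasing_node_iff.2 ⟨?_, increasing_leftChain (sortedLT_sort B).pairwise, hri⟩,
      avoidsLR_node_iff.2 ⟨right_leftChain _, avoidsLR_leftChain _, hra⟩⟩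
    · simp only [labels, labels_leftChain, sort_eq]
      exact (cons_add_eq_val_iff (s.min'_mem hs) hB).2 hr
    · intro x hx
      rw [labels_leftChain, sort_eq, hr, Multiset.mem_add, mem_val, mem_val] at hx
      exact min'_lt_of_mem_erase_min' _ _ (hx.elim (hB ·) (mem_sdiff.1 · |>.1))⟩

theorem attachBlock_injective (hs : s.Nonempty) : Function.Injective (attachBlock hs) := by
  rintro ⟨⟨B, hB⟩, r⟩ ⟨⟨B', hB'⟩, r'⟩ h
  injection congrArg Subtype.val h with _ hchain hr
  obtain rfl : B = B' := by
    simpa only [labels_leftChain, sort_eq, val_inj] using congrArg labels hchain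
  obtain rfl : r = r' := Subtype.ext hr
  rfl

theorem attachBlock_surjective (hs : s.Nonempty) : Function.Surjective (attachBlock hs) := by
  rintro ⟨_ | ⟨a, l, r⟩, hlab, hi, ha⟩
  · exact absurd (val_eq_zero.1 hlab.symm) hs.ne_empty
  obtain ⟨hlt, hli, hri⟩ := increasing_node_iff.1 hi
  obtain ⟨hlr, hla, hra⟩ := avoidsLR_node_iff.1 ha
  have hmem : ∀ y, y ∈ s ↔ y = a ∨ y ∈ l.labels + r.labels := fun y => by
    rw [← mem_val, ← hlab, labels, Multiset.mem_cons]
  obtain rfl : a = s.min' hs := le_antisymm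
    (le_min' _ _ _ fun y hy => ((hmem y).1 hy).elim (·.ge) (hlt y · |>.le))
    (min'_le _ _ ((hmem a).2 (Or.inl rfl)))
  have hnd : l.labels.Nodup := by
    have := s.nodup
    rw [← hlab, labels, Multiset.nodup_cons, Multiset.nodup_add] at this
    exact this.2.1
  have hB : (⟨l.labels, hnd⟩ : Finset ℕ) ⊆ s.erase (s.min' hs) := fun y hy =>
    mem_erase.2 ⟨(hlt y (Multiset.mem_add.2 (Or.inl hy))).ne',
      (hmem y).2 (Or.inr (Multiset.mem_add.2 (Or.inl hy)))⟩
  refine ⟨⟨⟨_, hB⟩, r, (cons_add_eq_val_iff (s.min'_mem hs) hB).1 hlab, hri, hra⟩, ?_⟩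
  exact Subtype.ext (congrArg₂ _ (eq_leftChain_sort hli hla hlr).symm rfl)

noncomputable def equivBlockSplit (hs : s.Nonempty) :
    AvoidingLR s ≃ BlockSplit AvoidingLR s (s.min' hs) :=
  (Equiv.ofBijective _ ⟨attachBlock_injective hs, attachBlock_surjective hs⟩).symm

noncomputable def equivFinpartition (s : Finset ℕ) : AvoidingLR s ≃ Finpartition s :=
  equivOfBlockSplit (fun _ hs => equivBlockSplit hs)
    (fun _ hs => Finpartition.equivBlockSplit (min'_mem _ hs))
    (Equiv.ofUnique (AvoidingLR ∅) (Finpartition (⊥ : Finset ℕ))) s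

end AvoidingLR

end TShelf

/-- treeshelves of size `n` avoiding "left child having a right
child" are counted by the Bell numbers (set partitions of `{1,…,n}`). -/
theorem stmt5 (n : ℕ) :
    Nat.card {t : TShelf // TShelf.IsShelf n t ∧ t.avoidsLR = true} =
      Nat.card (Finpartition (Finset.Icc 1 n)) :=
  Nat.card_congr <| (Equiv.subtypeEquivRight fun _ => and_assoc).trans
    (TShelf.AvoidingLR.equivFinpartition _)
end

section
/- For every n ≥ 1, there is a bijection between the set of partitions of the set {1,2,…,n} and the set of treeshelves of size n avoiding the pattern (left child having a right child). -/
/-!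
In a treeshelf where no left child has a right child, whatever hangs to the left of a node of the
right spine is a left chain. Grouping every spine node with its left chain turns the tree into a
list of blocks, and the labels increase along the chains and along the spine exactly when every
block is listed increasingly and the blocks are listed by increasing minima: the standard form of
a set partition, which is unique.
-/

namespace BlockList

section DecidableEq

variable {α : Type*}

def flat (L : List (α × List α)) : List α := L.flatMap fun p => p.1 :: p.2

lemma mem_flat_iff_mem {s : Finset α} {L : List (α × List α)}
    (hL : (flat L : Multiset α) = s.val) {x : α} : x ∈ flat L ↔ x ∈ s := by
  rw [← Multiset.mem_coe, hL, Finset.mem_val]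

variable [DecidableEq α]

def block (p : α × List α) : Finset α := (p.1 :: p.2).toFinset

lemma mem_block {x : α} {p : α × List α} : x ∈ block p ↔ x = p.1 ∨ x ∈ p.2 := by
  simp [block]

lemma head_mem_block (p : α × List α) : p.1 ∈ block p := mem_block.2 (Or.inl rfl)

lemma mem_flat {x : α} {L : List (α × List α)} :
    x ∈ flat L ↔ ∃ p ∈ L, x ∈ block p := by
  simp [flat, block]

lemma eq_of_mem_block_of_nodup_flat {L : List (α × List α)} (hL : (flat L).Nodup)
    {p q : α × List α} (hp : p ∈ L) (hq : q ∈ L) {x : α} (hxp : x ∈ block p)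
    (hxq : x ∈ block q) : p = q := by
  by_contra hpq
  have : Std.Symm (Function.onFun List.Disjoint fun p : α × List α => p.1 :: p.2) :=
    ⟨fun _ _ h => List.Disjoint.symm h⟩
  have hdisj := (List.nodup_flatMap.1 hL).2.forall hp hq hpq
  exact hdisj (by simpa [block] using hxp) (by simpa [block] using hxq)

variable {s : Finset α}

def toFinpartition (L : List (α × List α)) (hL : (flat L : Multiset α) = s.val) :
    Finpartition s :=
  Finpartition.ofExistsUnique ((L.map block).toFinset)
    (by
      simp only [List.mem_toFinset, List.mem_map]
      rintro _ ⟨p, hp, rfl⟩ x hx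
      exact (mem_flat_iff_mem hL).1 (mem_flat.2 ⟨p, hp, hx⟩))
    (by
      intro x hx
      obtain ⟨p, hp, hxp⟩ := mem_flat.1 ((mem_flat_iff_mem hL).2 hx)
      have hnd : (flat L).Nodup := by rw [← Multiset.coe_nodup, hL]; exact s.nodup
      refine ⟨block p, ⟨List.mem_toFinset.2 (List.mem_map_of_mem hp), hxp⟩, ?_⟩
      simp only [List.mem_toFinset, List.mem_map]
      rintro _ ⟨⟨q, hq, rfl⟩, hxq⟩
      rw [eq_of_mem_block_of_nodup_flat hnd hq hp hxq hxp])
    (by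
      simp only [List.mem_toFinset, List.mem_map, not_exists, not_and]
      exact fun p _ hp => Finset.nonempty_iff_ne_empty.1 ⟨p.1, head_mem_block p⟩ hp)

lemma part_toFinpartition {L : List (α × List α)} (hL : (flat L : Multiset α) = s.val)
    {p : α × List α} (hp : p ∈ L) {x : α} (hx : x ∈ block p) :
    (toFinpartition L hL).part x = block p :=
  Finpartition.part_eq_of_mem _ (List.mem_toFinset.2 (List.mem_map_of_mem hp)) hx

end DecidableEq

variable {α : Type*} [LinearOrder α]

def IsStandard (L : List (α × List α)) : Prop :=
  (∀ p ∈ L, (p.1 :: p.2).SortedLT) ∧ (L.map Prod.fst).SortedLT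

lemma head_le_of_mem_block {x : α} {p : α × List α} (hp : (p.1 :: p.2).SortedLT)
    (hx : x ∈ block p) : p.1 ≤ x := by
  rcases mem_block.1 hx with rfl | hx
  · exact le_rfl
  · exact (List.rel_of_pairwise_cons hp.pairwise hx).le

lemma block_mk_sort_erase {B : Finset α} {m : α} (hm : m ∈ B) :
    block (m, (B.erase m).sort) = B := by
  simp [block, Finset.insert_erase hm]

lemma mk_sort_erase_block {p : α × List α} (hp : (p.1 :: p.2).SortedLT) :
    (p.1, ((block p).erase p.1).sort) = p := by
  have hnd := hp.nodup
  rw [List.nodup_cons] at hnd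
  have hsort : (p.2.toFinset.sort : List α) = p.2 :=
    (List.toFinset_sort _ hnd.2).2 ((List.pairwise_cons.1 hp.pairwise).2.imp le_of_lt)
  simp [block, Finset.erase_insert (List.mem_toFinset.not.2 hnd.1), hsort]

lemma sortedLT_cons_sort_erase {B : Finset α} {m : α} (hmin : ∀ x ∈ B, m ≤ x) :
    (m :: (B.erase m).sort).SortedLT := by
  refine List.Pairwise.sortedLT
    (List.pairwise_cons.2 ⟨fun x hx => ?_, (Finset.sortedLT_sort _).pairwise⟩)
  rw [Finset.mem_sort, Finset.mem_erase] at hx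
  exact lt_of_le_of_ne (hmin x hx.2) (Ne.symm hx.1)

variable {s : Finset α}

def partMinima (P : Finpartition s) : Finset α := s.filter fun m => ∀ x ∈ P.part m, m ≤ x

def ofFinpartition (P : Finpartition s) : List (α × List α) :=
  (partMinima P).sort.map fun m => (m, ((P.part m).erase m).sort)

variable {P : Finpartition s}

lemma mem_partMinima {m : α} : m ∈ partMinima P ↔ m ∈ s ∧ ∀ x ∈ P.part m, m ≤ x :=
  Finset.mem_filter

lemma exists_mem_partMinima_part_eq {x : α} (hx : x ∈ s) :
    ∃ m ∈ partMinima P, P.part m = P.part x := by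
  have hne := P.part_nonempty.2 hx
  have hpart : P.part ((P.part x).min' hne) = P.part x :=
    P.part_eq_of_mem (P.part_mem.2 hx) (Finset.min'_mem _ hne)
  refine ⟨_, mem_partMinima.2 ⟨P.part_subset x (Finset.min'_mem _ hne), ?_⟩, hpart⟩
  rw [hpart]
  exact fun y hy => Finset.min'_le _ y hy

lemma block_mk_part {m : α} (hm : m ∈ partMinima P) :
    block (m, ((P.part m).erase m).sort) = P.part m :=
  block_mk_sort_erase (P.mem_part (mem_partMinima.1 hm).1)

lemma eq_of_mem_partMinima_of_part_eq {m m' : α} (hm : m ∈ partMinima P)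
    (hm' : m' ∈ partMinima P) (h : P.part m = P.part m') : m = m' := by
  rw [mem_partMinima] at hm hm'
  refine le_antisymm (hm.2 m' ?_) (hm'.2 m ?_)
  · exact h ▸ P.mem_part hm'.1
  · exact h ▸ P.mem_part hm.1

lemma isStandard_ofFinpartition (P : Finpartition s) : IsStandard (ofFinpartition P) := by
  refine ⟨?_, ?_⟩
  · simp only [ofFinpartition, List.mem_map, Finset.mem_sort]
    rintro _ ⟨m, hm, rfl⟩
    exact sortedLT_cons_sort_erase (mem_partMinima.1 hm).2
  · simpa [ofFinpartition, Function.comp_def] using Finset.sortedLT_sort _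

lemma flat_ofFinpartition (P : Finpartition s) :
    (flat (ofFinpartition P) : Multiset α) = s.val := by
  have hnodup : (flat (ofFinpartition P)).Nodup := by
    refine List.nodup_flatMap.2 ⟨fun p hp => ((isStandard_ofFinpartition P).1 p hp).nodup, ?_⟩
    refine List.pairwise_map.2 (((Finset.sortedLT_sort _).pairwise).imp_of_mem ?_)
    intro m m' hm hm' hlt x hx hx'
    rw [Finset.mem_sort] at hm hm'
    have hxm : x ∈ P.part m := by rw [← block_mk_part hm]; simpa [block] using hx
    have hxm' : x ∈ P.part m' := by rw [← block_mk_part hm']; simpa [block] using hx'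
    refine hlt.ne (eq_of_mem_partMinima_of_part_eq hm hm' ?_)
    exact (P.part_eq_of_mem (P.part_mem.2 (mem_partMinima.1 hm).1) hxm).symm.trans
      (P.part_eq_of_mem (P.part_mem.2 (mem_partMinima.1 hm').1) hxm')
  refine (Multiset.Nodup.ext (Multiset.coe_nodup.2 hnodup) s.nodup).2 fun x => ?_
  simp only [Multiset.mem_coe, mem_flat, ofFinpartition, List.mem_map, Finset.mem_sort]
  constructor
  · rintro ⟨_, ⟨m, hm, rfl⟩, hx⟩
    rw [block_mk_part hm] at hx
    exact P.part_subset m hx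
  · intro hx
    obtain ⟨m, hm, hpart⟩ := exists_mem_partMinima_part_eq hx
    exact ⟨_, ⟨m, hm, rfl⟩, by rw [block_mk_part hm, hpart]; exact P.mem_part hx⟩

lemma toFinpartition_ofFinpartition (P : Finpartition s) :
    toFinpartition (ofFinpartition P) (flat_ofFinpartition P) = P := by
  ext B
  simp only [toFinpartition, Finpartition.ofExistsUnique_parts, ofFinpartition,
    List.mem_toFinset, List.mem_map, Finset.mem_sort, exists_exists_and_eq_and]
  constructor
  · rintro ⟨m, hm, rfl⟩
    rw [block_mk_part hm]
    exact P.part_mem.2 (mem_partMinima.1 hm).1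
  · intro hB
    obtain ⟨x, hx⟩ := P.nonempty_of_mem_parts hB
    obtain ⟨m, hm, hpart⟩ := exists_mem_partMinima_part_eq (P.subset hB hx)
    exact ⟨m, hm, by rw [block_mk_part hm, hpart, P.part_eq_of_mem hB hx]⟩

lemma ofFinpartition_toFinpartition {L : List (α × List α)} (hstd : IsStandard L)
    (hL : (flat L : Multiset α) = s.val) : ofFinpartition (toFinpartition L hL) = L := by
  set P := toFinpartition L hL
  have hpart {p} (hp : p ∈ L) : P.part p.1 = block p :=
    part_toFinpartition hL hp (head_mem_block p)
  have hminima : (partMinima P).sort = L.map Prod.fst := by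
    refine (Finset.sortedLT_sort _).eq_of_mem_iff hstd.2 fun m => ?_
    simp only [Finset.mem_sort, mem_partMinima, List.mem_map]
    constructor
    · rintro ⟨hm, hmin⟩
      obtain ⟨p, hp, hmp⟩ := mem_flat.1 ((mem_flat_iff_mem hL).2 hm)
      refine ⟨p, hp, le_antisymm (head_le_of_mem_block (hstd.1 p hp) hmp) ?_⟩
      exact hmin p.1 (part_toFinpartition hL hp hmp ▸ head_mem_block p)
    · rintro ⟨p, hp, rfl⟩
      refine ⟨(mem_flat_iff_mem hL).1 (mem_flat.2 ⟨p, hp, head_mem_block p⟩), ?_⟩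
      rw [hpart hp]
      exact fun x => head_le_of_mem_block (hstd.1 p hp)
  rw [ofFinpartition, hminima, List.map_map]
  refine (List.map_congr_left fun p hp => ?_).trans L.map_id
  simp only [Function.comp_apply, hpart hp, id]
  exact mk_sort_erase_block (hstd.1 p hp)

variable (s) in
def equivFinpartition :
    {L : List (α × List α) // IsStandard L ∧ (flat L : Multiset α) = s.val} ≃
      Finpartition s where
  toFun L := toFinpartition L.1 L.2.2
  invFun P := ⟨ofFinpartition P, isStandard_ofFinpartition P, flat_ofFinpartition P⟩
  left_inv L := Subtype.ext (ofFinpartition_toFinpartition L.2.1 L.2.2)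
  right_inv := toFinpartition_ofFinpartition

end BlockList

namespace TShelf

open BlockList

def chain : List ℕ → TShelf
  | [] => leaf
  | a :: s => node a (chain s) leaf

def spine : List (ℕ × List ℕ) → TShelf
  | [] => leaf
  | (a, s) :: L => node a (chain s) (spine L)

def chainList : TShelf → List ℕ
  | leaf => []
  | node a l _ => a :: chainList l

def spineList : TShelf → List (ℕ × List ℕ)
  | leaf => []
  | node a l r => (a, chainList l) :: spineList r

@[simp] lemma chainList_chain (s : List ℕ) : chainList (chain s) = s := by
  induction s <;> simp [chain, chainList, *]

@[simp] lemma spineList_spine (L : List (ℕ × List ℕ)) : spineList (spine L) = L := by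
  induction L <;> simp [spine, spineList, *]

@[simp] lemma right_chain (s : List ℕ) : (chain s).right = leaf := by
  cases s <;> rfl

lemma avoidsLR_node {a : ℕ} {l r : TShelf} :
    (node a l r).avoidsLR = true ↔
      l.right = leaf ∧ l.avoidsLR = true ∧ r.avoidsLR = true := by
  rcases l with _ | ⟨b, l₁, _ | _⟩ <;> simp [avoidsLR, isNode, right]

lemma chain_chainList :
    ∀ t : TShelf, t.avoidsLR = true → t.right = leaf → chain (chainList t) = t
  | leaf, _, _ => rfl
  | node a l r, ht, hr => by
    obtain rfl : r = leaf := hr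
    obtain ⟨hl, hl', -⟩ := avoidsLR_node.1 ht
    simp [chainList, chain, chain_chainList l hl' hl]

lemma spine_spineList : ∀ t : TShelf, t.avoidsLR = true → spine (spineList t) = t
  | leaf, _ => rfl
  | node a l r, ht => by
    obtain ⟨hl, hl', hr⟩ := avoidsLR_node.1 ht
    simp [spineList, spine, chain_chainList l hl' hl, spine_spineList r hr]

lemma avoidsLR_chain (s : List ℕ) : (chain s).avoidsLR = true := by
  induction s with
  | nil => rfl
  | cons a s ih => exact avoidsLR_node.2 ⟨right_chain s, ih, rfl⟩

lemma avoidsLR_spine (L : List (ℕ × List ℕ)) : (spine L).avoidsLR = true := by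
  induction L with
  | nil => rfl
  | cons p L ih => exact avoidsLR_node.2 ⟨right_chain p.2, avoidsLR_chain p.2, ih⟩

lemma labels_chain (s : List ℕ) : (chain s).labels = s := by
  induction s <;> simp [chain, labels, *]

lemma labels_spine (L : List (ℕ × List ℕ)) : (spine L).labels = (flat L : Multiset ℕ) := by
  induction L with
  | nil => rfl
  | cons p L ih => simp [spine, labels, labels_chain, ih, flat]

lemma isNode_imp_lt_rootLabel_chain_iff {a : ℕ} {s : List ℕ} :
    ((chain s).isNode = true → a < (chain s).rootLabel) ↔ ∀ b ∈ s.head?, a < b := by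
  cases s <;> simp [chain, isNode, rootLabel]

lemma isNode_imp_lt_rootLabel_spine_iff {a : ℕ} {L : List (ℕ × List ℕ)} :
    ((spine L).isNode = true → a < (spine L).rootLabel) ↔
      ∀ b ∈ (L.map Prod.fst).head?, a < b := by
  rcases L with _ | ⟨⟨b, s⟩, L⟩ <;> simp [spine, isNode, rootLabel]

lemma increasing_node {a : ℕ} {l r : TShelf} :
    (node a l r).increasing = true ↔ (l.isNode = true → a < l.rootLabel) ∧
      (r.isNode = true → a < r.rootLabel) ∧ l.increasing = true ∧ r.increasing = true := by
  simp [increasing, Bool.or_eq_true, imp_iff_not_or, and_assoc]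

lemma increasing_chain (s : List ℕ) : (chain s).increasing = true ↔ s.IsChain (· < ·) := by
  induction s with
  | nil => simp [chain, increasing]
  | cons a s ih =>
    simp only [chain, increasing_node, isNode_imp_lt_rootLabel_chain_iff, ih, List.isChain_cons]
    simp [isNode, increasing]

lemma increasing_spine (L : List (ℕ × List ℕ)) :
    (spine L).increasing = true ↔ IsStandard L := by
  simp only [IsStandard, List.sortedLT_iff_isChain]
  induction L with
  | nil => simp [spine, increasing]
  | cons p L ih =>
    obtain ⟨a, s⟩ := p
    simp only [spine, increasing_node, isNode_imp_lt_rootLabel_chain_iff,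
      isNode_imp_lt_rootLabel_spine_iff, ih, increasing_chain, List.forall_mem_cons,
      List.map_cons, List.isChain_cons (l := List.map Prod.fst L), List.isChain_cons (l := s)]
    tauto

def spineEquiv (n : ℕ) :
    {L : List (ℕ × List ℕ) //
        IsStandard L ∧ (flat L : Multiset ℕ) = (Finset.Icc 1 n).val} ≃
      {t : TShelf // IsShelf n t ∧ t.avoidsLR = true} where
  toFun L :=
    ⟨spine L, ⟨(labels_spine L).trans L.2.2, (increasing_spine L).2 L.2.1⟩, avoidsLR_spine L⟩
  invFun t := ⟨spineList t, by
    obtain ⟨t, ⟨hlabels, hinc⟩, havoids⟩ := t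
    rw [← spine_spineList t havoids] at hlabels hinc
    exact ⟨(increasing_spine _).1 hinc, (labels_spine _).symm.trans hlabels⟩⟩
  left_inv L := Subtype.ext (spineList_spine L)
  right_inv t := Subtype.ext (spine_spineList t t.2.2)

end TShelf

theorem stmt16_general (n : ℕ) :
    Nonempty (Finpartition (Finset.Icc 1 n) ≃
      {t : TShelf // TShelf.IsShelf n t ∧ t.avoidsLR = true}) :=
  ⟨(BlockList.equivFinpartition _).symm.trans (TShelf.spineEquiv n)⟩

/-- bijection between set partitions of `{1,…,n}` and treeshelves
of size `n` avoiding "left child having a right child". -/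
theorem stmt16 (n : ℕ) (hn : 1 ≤ n) :
    Nonempty (Finpartition (Finset.Icc 1 n) ≃
      {t : TShelf // TShelf.IsShelf n t ∧ t.avoidsLR = true}) :=
  stmt16_general n
end
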